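/- (Parameter dependence for the Volterra integral equation) Let 0 < α ≤ 1, ψ increasing C¹ on I, 0 ≤ N̄ < 1, Q ≥ 0, r̄ continuous nonnegative with t ↦ r̄(t,t) nondecreasing and r̄(t,σ) ≤ r̄(t,t), and q ∈ C(I,ℝ≥0) with q(t) ≤ Q. Suppose h satisfies |h(t,u,v,μ)−h(t,ū,v̄,μ)| ≤ N̄(|u−ū|+|v−v̄|), |h(t,u,v,μ)−h(t,u,v,μ₀)| ≤ q(t)|μ−μ₀|, and g satisfies |g(t,σ,u)−g(t,σ,v)| ≤ r̄(t,σ)|u−v|. If z₁ solves z(t) = h(t, z(t), (1/Γ(α))∫_a^t ψ'(σ)(ψ(t)−ψ(σ))^{α−1}g(t,σ,z(σ))dσ, μ) and z₂ solves the same equation with μ₀ in place of μ, then |z₁(t)−z₂(t)| ≤ (Q|μ−μ₀|/(1−N̄)) E_α( (N̄/(1−N̄)) r̄(t,t)(ψ(t)−ψ(a))^α ) for all t ∈ I. -/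

import Mathlib

/-!
Subtracting the two equations and using the Lipschitz bounds on `h` and `g`, the function
`w = ‖z₁ - z₂‖` satisfies `w(t) ≤ c + λ r̄(t,t) I^{α;ψ} w (t)` with `c = Q|μ - μ₀|/(1 - N̄)` and
`λ = N̄/(1 - N̄)`. Iterating this inequality with the power rule
`I^{α;ψ} (ψ - ψ(a))^{αj} = Γ(αj+1)/Γ(αj+α+1) (ψ - ψ(a))^{α(j+1)}` (a Beta integral after the
substitution `u = ψ(σ)`) bounds `w` by a partial sum of `c E_α(λ r̄(t,t)(ψ(t) - ψ(a))^α)` plus a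
remainder `M x^k/Γ(αk+1)`, which tends to zero because the Mittag-Leffler series converges
(ratio test, via Gautschi's inequality `Γ(s+1) ≤ Γ(s+α)(s+α)^{1-α}`).
-/

open MeasureTheory Set

/-- One-parameter Mittag-Leffler function `E_α(z) = ∑ z^k / Γ(αk+1)`. -/
noncomputable def ML (α z : ℝ) : ℝ := ∑' k : ℕ, z ^ k / Real.Gamma (α * k + 1)

/-- The inner Volterra integral operator. -/
noncomputable def volterraK {n : ℕ} (α : ℝ) (ψ : ℝ → ℝ) (a : ℝ)
    (g : ℝ → ℝ → EuclideanSpace ℝ (Fin n) → EuclideanSpace ℝ (Fin n))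
    (z : ℝ → EuclideanSpace ℝ (Fin n)) (t : ℝ) : EuclideanSpace ℝ (Fin n) :=
  (Real.Gamma α)⁻¹ • ∫ σ in a..t, (deriv ψ σ * (ψ t - ψ σ) ^ (α - 1)) • g t σ (z σ)

open Filter Topology intervalIntegral

theorem Real.Gamma_add_one_le_Gamma_add_mul_rpow {α s : ℝ} (hα0 : 0 < α) (hα1 : α ≤ 1)
    (hs : 0 < s) : Real.Gamma (s + 1) ≤ Real.Gamma (s + α) * (s + α) ^ (1 - α) := by
  rcases hα1.eq_or_lt with rfl | hα1
  · simp
  have hsα : 0 < s + α := by linarith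
  have hΓ := Real.Gamma_pos_of_pos hsα
  have hconv := Real.Gamma_mul_add_mul_le_rpow_Gamma_mul_rpow_Gamma hsα
    (by linarith : 0 < s + α + 1) hα0 (sub_pos.2 hα1) (add_sub_cancel α 1)
  rw [Real.Gamma_add_one hsα.ne', Real.mul_rpow hsα.le hΓ.le] at hconv
  calc Real.Gamma (s + 1) = Real.Gamma (α * (s + α) + (1 - α) * (s + α + 1)) := by ring_nf
    _ ≤ _ := hconv
    _ = Real.Gamma (s + α) ^ (α + (1 - α)) * (s + α) ^ (1 - α) := by
      rw [Real.rpow_add hΓ]; ring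
    _ = _ := by rw [add_sub_cancel, Real.rpow_one]

theorem Real.rpow_mul_Gamma_le_two_mul_Gamma_add {α s : ℝ} (hα0 : 0 < α) (hα1 : α ≤ 1)
    (hs : α ≤ s) : s ^ α * Real.Gamma s ≤ 2 * Real.Gamma (s + α) := by
  have hs0 : 0 < s := hα0.trans_le hs
  have hgrowth : (s + α) ^ (1 - α) ≤ 2 * s ^ (1 - α) :=
    calc (s + α) ^ (1 - α) ≤ (2 * s) ^ (1 - α) := by gcongr; linarith
      _ = 2 ^ (1 - α) * s ^ (1 - α) := Real.mul_rpow zero_le_two hs0.le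
      _ ≤ 2 ^ (1 : ℝ) * s ^ (1 - α) := by
          gcongr
          · norm_num
          · linarith
      _ = 2 * s ^ (1 - α) := by rw [Real.rpow_one]
  have hgautschi : s * Real.Gamma s ≤ 2 * Real.Gamma (s + α) * s ^ (1 - α) :=
    calc s * Real.Gamma s = Real.Gamma (s + 1) := (Real.Gamma_add_one hs0.ne').symm
      _ ≤ Real.Gamma (s + α) * (s + α) ^ (1 - α) :=
          Real.Gamma_add_one_le_Gamma_add_mul_rpow hα0 hα1 hs0
      _ ≤ Real.Gamma (s + α) * (2 * s ^ (1 - α)) := by gcongr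
      _ = _ := by ring
  have hsplit : s * Real.Gamma s = s ^ α * Real.Gamma s * s ^ (1 - α) := by
    rw [mul_right_comm, ← Real.rpow_add hs0, add_sub_cancel, Real.rpow_one]
  rw [hsplit] at hgautschi
  exact le_of_mul_le_mul_right hgautschi (Real.rpow_pos_of_pos hs0 _)

noncomputable def mlTerm (α x : ℝ) (k : ℕ) : ℝ := x ^ k / Real.Gamma (α * k + 1)

theorem mlTerm_zero (α x : ℝ) : mlTerm α x 0 = 1 := by
  simp [mlTerm]

theorem continuous_mlTerm (α : ℝ) (k : ℕ) : Continuous fun x => mlTerm α x k :=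
  (continuous_pow k).div_const _

theorem mlTerm_le_mlTerm {α x y : ℝ} (hα : 0 ≤ α) (hx : 0 ≤ x) (hxy : x ≤ y) (k : ℕ) :
    mlTerm α x k ≤ mlTerm α y k :=
  div_le_div_of_nonneg_right (pow_le_pow_left₀ hx hxy k)
    (Real.Gamma_pos_of_pos (by positivity)).le

theorem summable_mlTerm {α : ℝ} (hα0 : 0 < α) (hα1 : α ≤ 1) (x : ℝ) :
    Summable (mlTerm α x) := by
  refine summable_of_ratio_norm_eventually_le one_half_lt_one ?_
  have hs : Tendsto (fun k : ℕ => (α * k + 1) ^ α) atTop atTop :=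
    (tendsto_rpow_atTop hα0).comp <| tendsto_atTop_add_const_right _ 1 <|
      tendsto_natCast_atTop_atTop.const_mul_atTop hα0
  filter_upwards [hs.eventually_ge_atTop (4 * |x|)] with k hk
  have hΓ : 0 < Real.Gamma (α * k + 1) := Real.Gamma_pos_of_pos (by positivity)
  have hΓ' : 0 < Real.Gamma (α * k + 1 + α) := Real.Gamma_pos_of_pos (by positivity)
  have hratio : 4 * |x| * Real.Gamma (α * k + 1) ≤ 2 * Real.Gamma (α * k + 1 + α) :=
    (mul_le_mul_of_nonneg_right hk hΓ.le).trans <|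
      Real.rpow_mul_Gamma_le_two_mul_Gamma_add hα0 hα1
        (by nlinarith [Nat.cast_nonneg (α := ℝ) k])
  have hidx : α * ((k + 1 : ℕ) : ℝ) + 1 = α * k + 1 + α := by push_cast; ring
  rw [mlTerm, mlTerm, hidx, norm_div, norm_div, Real.norm_of_nonneg hΓ.le,
    Real.norm_of_nonneg hΓ'.le, norm_pow, norm_pow, Real.norm_eq_abs, pow_succ,
    div_le_iff₀ hΓ', mul_div_assoc', div_mul_eq_mul_div, le_div_iff₀ hΓ]
  have := pow_nonneg (abs_nonneg x) k
  nlinarith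

/-- The bound on `w` after `k` iterations of the Gronwall inequality; `M` is an a priori bound. -/
noncomputable def mlBound (α c M : ℝ) (k : ℕ) (x : ℝ) : ℝ :=
  c * ∑ j ∈ Finset.range k, mlTerm α x j + M * mlTerm α x k

theorem continuous_mlBound (α c M : ℝ) (k : ℕ) : Continuous (mlBound α c M k) :=
  (continuous_const.mul (continuous_finsetSum _ fun j _ => continuous_mlTerm α j)).add
    (continuous_const.mul (continuous_mlTerm α k))

theorem mlBound_le_mlBound {α c M x y : ℝ} (hα : 0 ≤ α) (hc : 0 ≤ c) (hM : 0 ≤ M) (hx : 0 ≤ x)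
    (hxy : x ≤ y) (k : ℕ) : mlBound α c M k x ≤ mlBound α c M k y :=
  add_le_add
    (mul_le_mul_of_nonneg_left
      (Finset.sum_le_sum fun j _ => mlTerm_le_mlTerm hα hx hxy j) hc)
    (mul_le_mul_of_nonneg_left (mlTerm_le_mlTerm hα hx hxy k) hM)

theorem tendsto_mlBound {α : ℝ} (hα0 : 0 < α) (hα1 : α ≤ 1) (c M x : ℝ) :
    Tendsto (fun k => mlBound α c M k x) atTop (𝓝 (c * ML α x)) := by
  have hs := summable_mlTerm hα0 hα1 x
  have := (hs.hasSum.tendsto_sum_nat.const_mul c).add (hs.tendsto_atTop_zero.const_mul M)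
  rwa [mul_zero, add_zero] at this

theorem integral_rpow_mul_sub_rpow {α β L : ℝ} (hα : 0 < α) (hβ : 0 ≤ β) (hL : 0 ≤ L) :
    ∫ x in (0 : ℝ)..L, x ^ β * (L - x) ^ (α - 1) =
      Real.Gamma (β + 1) * Real.Gamma α / Real.Gamma (α + β + 1) * L ^ (α + β) := by
  rcases hL.eq_or_lt with rfl | hL
  · simp [Real.zero_rpow (by positivity : α + β ≠ 0)]
  have hbeta := Complex.betaIntegral_scaled (β + 1) α hL
  rw [Complex.betaIntegral_eq_Gamma_mul_div _ _ (by simp; linarith) (by simpa)] at hbeta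
  have hcast : ∫ x in (0 : ℝ)..L, (x : ℂ) ^ ((β : ℂ) + 1 - 1) * ((L : ℂ) - x) ^ ((α : ℂ) - 1) =
      ((∫ x in (0 : ℝ)..L, x ^ β * (L - x) ^ (α - 1) : ℝ) : ℂ) := by
    rw [← intervalIntegral.integral_ofReal]
    refine integral_congr fun x hx => ?_
    rw [uIcc_of_le hL.le] at hx
    simp only [add_sub_cancel_right, Complex.ofReal_mul,
      Complex.ofReal_cpow hx.1, Complex.ofReal_cpow (sub_nonneg.2 hx.2)]
    push_cast
    ring_nf
  rw [hcast, ← Complex.ofReal_one, ← Complex.ofReal_add, ← Complex.ofReal_add,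
    ← Complex.ofReal_sub, ← Complex.ofReal_cpow hL.le, Complex.Gamma_ofReal, Complex.Gamma_ofReal,
    Complex.Gamma_ofReal] at hbeta
  rw [show β + 1 + α - 1 = α + β by ring, show β + 1 + α = α + β + 1 by ring] at hbeta
  rw [mul_comm]
  exact_mod_cast hbeta

section FracIntegral

variable {α β a b t : ℝ} {ψ : ℝ → ℝ}

noncomputable def fracKernel (α : ℝ) (ψ : ℝ → ℝ) (t σ : ℝ) : ℝ :=
  deriv ψ σ * (ψ t - ψ σ) ^ (α - 1)

/-- The `ψ`-Riemann–Liouville fractional integral `I^{α;ψ}_{a+} f (t)`. -/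
noncomputable def fracIntegral (α : ℝ) (ψ : ℝ → ℝ) (a : ℝ) (f : ℝ → ℝ) (t : ℝ) : ℝ :=
  (Real.Gamma α)⁻¹ * ∫ σ in a..t, fracKernel α ψ t σ * f σ

theorem MonotoneOn.deriv_nonneg_of_mem_Ioo (hψ : MonotoneOn ψ (Icc a b)) {x : ℝ}
    (hx : x ∈ Ioo a b) : 0 ≤ deriv ψ x := by
  rw [← derivWithin_of_mem_nhds (Icc_mem_nhds hx.1 hx.2)]
  exact hψ.derivWithin_nonneg

theorem ContDiffOn.hasDerivAt_of_mem_Ioo (hψ' : ContDiffOn ℝ 1 ψ (Icc a b)) {x : ℝ}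
    (hx : x ∈ Ioo a b) : HasDerivAt ψ (deriv ψ x) x :=
  ((hψ'.contDiffAt (Icc_mem_nhds hx.1 hx.2)).differentiableAt one_ne_zero).hasDerivAt

theorem fracKernel_nonneg (hψ : MonotoneOn ψ (Icc a b)) (ht : t ∈ Icc a b) {σ : ℝ}
    (hσ : σ ∈ Ioo a t) : 0 ≤ fracKernel α ψ t σ :=
  mul_nonneg (hψ.deriv_nonneg_of_mem_Ioo ⟨hσ.1, hσ.2.trans_le ht.2⟩) <| Real.rpow_nonneg
    (sub_nonneg.2 (hψ ⟨hσ.1.le, hσ.2.le.trans ht.2⟩ ht hσ.2.le)) _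

theorem Ioo_min_max_subset_Ioo (ht : t ∈ Icc a b) : Ioo (min a t) (max a t) ⊆ Ioo a b :=
  Ioo_subset_Ioo (le_min le_rfl ht.1) (max_le (ht.1.trans ht.2) ht.2)

theorem intervalIntegrable_deriv_mul_comp_iff (hψ : MonotoneOn ψ (Icc a b))
    (hψ' : ContDiffOn ℝ 1 ψ (Icc a b)) (ht : t ∈ Icc a b) (F : ℝ → ℝ) :
    IntervalIntegrable (fun σ => deriv ψ σ * F (ψ σ)) volume a t ↔
      IntervalIntegrable F volume (ψ a) (ψ t) := by
  simpa only [mul_comm (deriv ψ _), Function.comp_apply] using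
    integrable_comp_mul_deriv_iff_of_deriv_nonneg (g := F)
      (hψ'.continuousOn.mono (uIcc_subset_Icc ⟨le_rfl, ht.1.trans ht.2⟩ ht))
      (fun x hx => hψ'.hasDerivAt_of_mem_Ioo (Ioo_min_max_subset_Ioo ht hx))
      (fun x hx => hψ.deriv_nonneg_of_mem_Ioo (Ioo_min_max_subset_Ioo ht hx))

theorem integral_deriv_mul_comp (hψ : MonotoneOn ψ (Icc a b))
    (hψ' : ContDiffOn ℝ 1 ψ (Icc a b)) (ht : t ∈ Icc a b) (F : ℝ → ℝ) :
    ∫ σ in a..t, deriv ψ σ * F (ψ σ) = ∫ u in ψ a..ψ t, F u := by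
  simpa only [mul_comm (deriv ψ _), Function.comp_apply] using
    integral_comp_mul_deriv_of_deriv_nonneg (g := F)
      (hψ'.continuousOn.mono (uIcc_subset_Icc ⟨le_rfl, ht.1.trans ht.2⟩ ht))
      (fun x hx => hψ'.hasDerivAt_of_mem_Ioo (Ioo_min_max_subset_Ioo ht hx))
      (fun x hx => hψ.deriv_nonneg_of_mem_Ioo (Ioo_min_max_subset_Ioo ht hx))

theorem intervalIntegrable_fracKernel (hα : 0 < α) (hψ : MonotoneOn ψ (Icc a b))
    (hψ' : ContDiffOn ℝ 1 ψ (Icc a b)) (ht : t ∈ Icc a b) :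
    IntervalIntegrable (fracKernel α ψ t) volume a t := by
  refine (intervalIntegrable_deriv_mul_comp_iff hψ hψ' ht fun u => (ψ t - u) ^ (α - 1)).2 ?_
  simpa using (intervalIntegrable_rpow' (a := ψ t - ψ a) (b := 0) (by linarith)).comp_sub_left
    (ψ t)

theorem intervalIntegrable_fracKernel_mul (hα : 0 < α) (hψ : MonotoneOn ψ (Icc a b))
    (hψ' : ContDiffOn ℝ 1 ψ (Icc a b)) (ht : t ∈ Icc a b) {f : ℝ → ℝ}
    (hf : ContinuousOn f (Icc a t)) :
    IntervalIntegrable (fun σ => fracKernel α ψ t σ * f σ) volume a t :=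
  (intervalIntegrable_fracKernel hα hψ hψ' ht).mul_continuousOn (uIcc_of_le ht.1 ▸ hf)

theorem integral_fracKernel_mul_rpow (hα : 0 < α) (hβ : 0 ≤ β) (hψ : MonotoneOn ψ (Icc a b))
    (hψ' : ContDiffOn ℝ 1 ψ (Icc a b)) (ht : t ∈ Icc a b) :
    ∫ σ in a..t, fracKernel α ψ t σ * (ψ σ - ψ a) ^ β =
      Real.Gamma (β + 1) * Real.Gamma α / Real.Gamma (α + β + 1) * (ψ t - ψ a) ^ (α + β) := by
  have hshift : ∫ u in ψ a..ψ t, (u - ψ a) ^ β * (ψ t - u) ^ (α - 1) =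
      ∫ x in (0 : ℝ)..ψ t - ψ a, x ^ β * (ψ t - ψ a - x) ^ (α - 1) := by
    simpa using intervalIntegral.integral_comp_sub_right
      (fun x => x ^ β * (ψ t - ψ a - x) ^ (α - 1)) (ψ a) (a := ψ a) (b := ψ t)
  rw [← integral_rpow_mul_sub_rpow hα hβ (sub_nonneg.2 (hψ ⟨le_rfl, ht.1.trans ht.2⟩ ht ht.1)),
    ← hshift, ← integral_deriv_mul_comp hψ hψ' ht]
  simp only [fracKernel]
  congr 1; ext σ; ring

theorem fracIntegral_rpow (hα : 0 < α) (hβ : 0 ≤ β) (hψ : MonotoneOn ψ (Icc a b))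
    (hψ' : ContDiffOn ℝ 1 ψ (Icc a b)) (ht : t ∈ Icc a b) :
    fracIntegral α ψ a (fun σ => (ψ σ - ψ a) ^ β) t =
      Real.Gamma (β + 1) / Real.Gamma (α + β + 1) * (ψ t - ψ a) ^ (α + β) := by
  rw [fracIntegral, integral_fracKernel_mul_rpow hα hβ hψ hψ' ht]
  field_simp [(Real.Gamma_pos_of_pos hα).ne']

theorem fracIntegral_congr {f g : ℝ → ℝ} (hat : a ≤ t) (hfg : EqOn f g (Icc a t)) :
    fracIntegral α ψ a f t = fracIntegral α ψ a g t := by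
  rw [fracIntegral, fracIntegral,
    integral_congr fun σ hσ => by rw [hfg (uIcc_of_le hat ▸ hσ)]]

theorem fracIntegral_const_mul (c : ℝ) (f : ℝ → ℝ) :
    fracIntegral α ψ a (fun σ => c * f σ) t = c * fracIntegral α ψ a f t := by
  rw [fracIntegral, fracIntegral, mul_left_comm c]
  simp only [mul_left_comm _ c, intervalIntegral.integral_const_mul]

theorem fracIntegral_add (hα : 0 < α) (hψ : MonotoneOn ψ (Icc a b))
    (hψ' : ContDiffOn ℝ 1 ψ (Icc a b)) (ht : t ∈ Icc a b) {f g : ℝ → ℝ}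
    (hf : ContinuousOn f (Icc a t)) (hg : ContinuousOn g (Icc a t)) :
    fracIntegral α ψ a (fun σ => f σ + g σ) t =
      fracIntegral α ψ a f t + fracIntegral α ψ a g t := by
  simp only [fracIntegral, mul_add]
  rw [integral_add (intervalIntegrable_fracKernel_mul hα hψ hψ' ht hf)
    (intervalIntegrable_fracKernel_mul hα hψ hψ' ht hg), mul_add]

theorem fracIntegral_sum {ι : Type*} (s : Finset ι) (hα : 0 < α) (hψ : MonotoneOn ψ (Icc a b))
    (hψ' : ContDiffOn ℝ 1 ψ (Icc a b)) (ht : t ∈ Icc a b) {f : ι → ℝ → ℝ}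
    (hf : ∀ i ∈ s, ContinuousOn (f i) (Icc a t)) :
    fracIntegral α ψ a (fun σ => ∑ i ∈ s, f i σ) t = ∑ i ∈ s, fracIntegral α ψ a (f i) t := by
  simp only [fracIntegral, Finset.mul_sum]
  rw [integral_finsetSum fun i hi => intervalIntegrable_fracKernel_mul hα hψ hψ' ht (hf i hi),
    Finset.mul_sum]

theorem fracIntegral_mono (hα : 0 < α) (hψ : MonotoneOn ψ (Icc a b))
    (hψ' : ContDiffOn ℝ 1 ψ (Icc a b)) (ht : t ∈ Icc a b) {f g : ℝ → ℝ}
    (hf : ContinuousOn f (Icc a t)) (hg : ContinuousOn g (Icc a t))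
    (hfg : ∀ σ ∈ Ioo a t, f σ ≤ g σ) :
    fracIntegral α ψ a f t ≤ fracIntegral α ψ a g t :=
  mul_le_mul_of_nonneg_left
    (integral_mono_on_of_le_Ioo ht.1 (intervalIntegrable_fracKernel_mul hα hψ hψ' ht hf)
      (intervalIntegrable_fracKernel_mul hα hψ hψ' ht hg) fun σ hσ =>
        mul_le_mul_of_nonneg_left (hfg σ hσ) (fracKernel_nonneg hψ ht hσ))
    (inv_nonneg.2 (Real.Gamma_pos_of_pos hα).le)

theorem continuousOn_mul_sub_rpow {s : Set ℝ} (hα : 0 ≤ α) (hψ : ContinuousOn ψ s) (γ : ℝ) :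
    ContinuousOn (fun σ => γ * (ψ σ - ψ a) ^ α) s :=
  continuousOn_const.mul <| (hψ.sub continuousOn_const).rpow_const fun _ _ => Or.inr hα

theorem mul_fracIntegral_mlTerm (hα : 0 < α) (hψ : MonotoneOn ψ (Icc a b))
    (hψ' : ContDiffOn ℝ 1 ψ (Icc a b)) (ht : t ∈ Icc a b) (γ : ℝ) (j : ℕ) :
    γ * fracIntegral α ψ a (fun σ => mlTerm α (γ * (ψ σ - ψ a) ^ α) j) t =
      mlTerm α (γ * (ψ t - ψ a) ^ α) (j + 1) := by
  have hpow : ∀ σ ∈ Icc a b, ∀ i : ℕ,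
      (γ * (ψ σ - ψ a) ^ α) ^ i = γ ^ i * (ψ σ - ψ a) ^ (α * i) := fun σ hσ i => by
    rw [mul_pow, ← Real.rpow_natCast ((ψ σ - ψ a) ^ α),
      ← Real.rpow_mul (sub_nonneg.2 (hψ ⟨le_rfl, hσ.1.trans hσ.2⟩ hσ hσ.1))]
  have hΓ : Real.Gamma (α * j + 1) ≠ 0 := (Real.Gamma_pos_of_pos (by positivity)).ne'
  rw [fracIntegral_congr ht.1
      (g := fun σ => γ ^ j / Real.Gamma (α * j + 1) * (ψ σ - ψ a) ^ (α * j))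
      fun σ hσ => by
        simp only [mlTerm, hpow σ ⟨hσ.1, hσ.2.trans ht.2⟩]
        ring,
    fracIntegral_const_mul, fracIntegral_rpow hα (by positivity) hψ hψ' ht, mlTerm, hpow t ht,
    show α + α * (j : ℝ) = α * ((j + 1 : ℕ) : ℝ) by push_cast; ring]
  field_simp
  ring

theorem add_mul_fracIntegral_mlBound (hα : 0 < α) (hψ : MonotoneOn ψ (Icc a b))
    (hψ' : ContDiffOn ℝ 1 ψ (Icc a b)) (ht : t ∈ Icc a b) (c M γ : ℝ) (k : ℕ) :
    c + γ * fracIntegral α ψ a (fun σ => mlBound α c M k (γ * (ψ σ - ψ a) ^ α)) t =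
      mlBound α c M (k + 1) (γ * (ψ t - ψ a) ^ α) := by
  have hterm : ∀ j, ContinuousOn (fun σ => mlTerm α (γ * (ψ σ - ψ a) ^ α) j) (Icc a t) :=
    fun j => (continuous_mlTerm α j).comp_continuousOn
      ((continuousOn_mul_sub_rpow hα.le hψ'.continuousOn γ).mono (Icc_subset_Icc_right ht.2))
  simp only [mlBound]
  rw [fracIntegral_add hα hψ hψ' ht
      ((continuousOn_finsetSum _ fun j _ => hterm j).const_mul _) ((hterm k).const_mul _),
    fracIntegral_const_mul, fracIntegral_const_mul,
    fracIntegral_sum _ hα hψ hψ' ht fun j _ => hterm j, mul_add, mul_left_comm γ c,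
    mul_left_comm γ M, Finset.mul_sum, Finset.sum_range_succ' _ k]
  simp only [mul_fracIntegral_mlTerm hα hψ hψ' ht, mlTerm_zero]
  ring

theorem le_mul_ML_of_le_add_mul_fracIntegral (hα0 : 0 < α) (hα1 : α ≤ 1)
    (hψ : MonotoneOn ψ (Icc a b)) (hψ' : ContDiffOn ℝ 1 ψ (Icc a b)) {c : ℝ} {G w : ℝ → ℝ}
    (hc : 0 ≤ c) (hG0 : ∀ t ∈ Icc a b, 0 ≤ G t) (hG : MonotoneOn G (Icc a b))
    (hw : ContinuousOn w (Icc a b))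
    (hle : ∀ t ∈ Icc a b, w t ≤ c + G t * fracIntegral α ψ a w t) (ht : t ∈ Icc a b) :
    w t ≤ c * ML α (G t * (ψ t - ψ a) ^ α) := by
  obtain ⟨C, hC⟩ := isCompact_Icc.exists_bound_of_continuousOn hw
  set M := max C 0
  have hM : ∀ t ∈ Icc a b, w t ≤ M := fun t ht =>
    (le_abs_self _).trans ((hC t ht).trans (le_max_left _ _))
  have hbound : ∀ k : ℕ, ∀ t ∈ Icc a b, w t ≤ mlBound α c M k (G t * (ψ t - ψ a) ^ α) := by
    intro k
    induction k with
    | zero => intro t ht; simpa [mlBound, mlTerm_zero] using hM t ht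
    | succ k ih =>
      intro t ht
      have hsub : Icc a t ⊆ Icc a b := Icc_subset_Icc_right ht.2
      have hmono : fracIntegral α ψ a w t ≤
          fracIntegral α ψ a (fun σ => mlBound α c M k (G t * (ψ σ - ψ a) ^ α)) t := by
        refine fracIntegral_mono hα0 hψ hψ' ht (hw.mono hsub)
          ((continuous_mlBound α c M k).comp_continuousOn
            ((continuousOn_mul_sub_rpow hα0.le hψ'.continuousOn _).mono hsub)) fun σ hσ => ?_
        have hσ' : σ ∈ Icc a b := hsub (Ioo_subset_Icc_self hσ)
        have hpow : 0 ≤ (ψ σ - ψ a) ^ α :=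
          Real.rpow_nonneg (sub_nonneg.2 (hψ ⟨le_rfl, hσ'.1.trans hσ'.2⟩ hσ' hσ'.1)) α
        exact (ih σ hσ').trans <| mlBound_le_mlBound hα0.le hc (le_max_right _ _)
          (mul_nonneg (hG0 σ hσ') hpow)
          (mul_le_mul_of_nonneg_right (hG hσ' ht hσ.2.le) hpow) k
      calc w t ≤ c + G t * fracIntegral α ψ a w t := hle t ht
        _ ≤ c + G t * fracIntegral α ψ a
            (fun σ => mlBound α c M k (G t * (ψ σ - ψ a) ^ α)) t := by
          gcongr
          exact hG0 t ht
        _ = _ := add_mul_fracIntegral_mlBound hα0 hψ hψ' ht c M (G t) k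
  exact ge_of_tendsto' (tendsto_mlBound hα0 hα1 c M _) fun k => hbound k t ht

end FracIntegral

theorem norm_sub_le_of_eq_of_lipschitz {E : Type*} [SeminormedAddCommGroup E]
    {F₁ F₂ : E → E → E} {x₁ x₂ v₁ v₂ : E} {N e : ℝ} (hN : N < 1)
    (h₁ : x₁ = F₁ x₁ v₁) (h₂ : x₂ = F₂ x₂ v₂)
    (hLip : ‖F₁ x₁ v₁ - F₁ x₂ v₂‖ ≤ N * (‖x₁ - x₂‖ + ‖v₁ - v₂‖))
    (hpert : ‖F₁ x₂ v₂ - F₂ x₂ v₂‖ ≤ e) :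
    ‖x₁ - x₂‖ ≤ e / (1 - N) + N / (1 - N) * ‖v₁ - v₂‖ := by
  have htri : ‖x₁ - x₂‖ ≤ N * (‖x₁ - x₂‖ + ‖v₁ - v₂‖) + e :=
    calc ‖x₁ - x₂‖ = ‖(F₁ x₁ v₁ - F₁ x₂ v₂) + (F₁ x₂ v₂ - F₂ x₂ v₂)‖ := by
          rw [sub_add_sub_cancel, ← h₁, ← h₂]
      _ ≤ _ := (norm_add_le _ _).trans (add_le_add hLip hpert)
  rw [div_mul_eq_mul_div, ← add_div, le_div_iff₀ (sub_pos.2 hN)]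
  linarith

theorem volterraK_eq {n : ℕ} (α : ℝ) (ψ : ℝ → ℝ) (a : ℝ)
    (g : ℝ → ℝ → EuclideanSpace ℝ (Fin n) → EuclideanSpace ℝ (Fin n))
    (z : ℝ → EuclideanSpace ℝ (Fin n)) (t : ℝ) :
    volterraK α ψ a g z t = (Real.Gamma α)⁻¹ • ∫ σ in a..t, fracKernel α ψ t σ • g t σ (z σ) :=
  rfl

theorem norm_volterraK_sub_le {n : ℕ} {α a b t R : ℝ} {ψ : ℝ → ℝ}
    {g : ℝ → ℝ → EuclideanSpace ℝ (Fin n) → EuclideanSpace ℝ (Fin n)}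
    {z₁ z₂ : ℝ → EuclideanSpace ℝ (Fin n)} (hα : 0 < α) (hψ : MonotoneOn ψ (Icc a b))
    (hψ' : ContDiffOn ℝ 1 ψ (Icc a b))
    (hg : Continuous fun p : ℝ × ℝ × EuclideanSpace ℝ (Fin n) => g p.1 p.2.1 p.2.2)
    (hz₁ : ContinuousOn z₁ (Icc a b)) (hz₂ : ContinuousOn z₂ (Icc a b)) (ht : t ∈ Icc a b)
    (hgLip : ∀ σ ∈ Ioo a t, ∀ u v, ‖g t σ u - g t σ v‖ ≤ R * ‖u - v‖) :
    ‖volterraK α ψ a g z₁ t - volterraK α ψ a g z₂ t‖ ≤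
      R * fracIntegral α ψ a (fun σ => ‖z₁ σ - z₂ σ‖) t := by
  have hsub : Icc a t ⊆ Icc a b := Icc_subset_Icc_right ht.2
  have hker := intervalIntegrable_fracKernel hα hψ hψ' ht
  have hgz : ∀ z : ℝ → EuclideanSpace ℝ (Fin n), ContinuousOn z (Icc a b) →
      ContinuousOn (fun σ => g t σ (z σ)) (uIcc a t) := fun z hz => by
    rw [uIcc_of_le ht.1]
    exact hg.comp_continuousOn
      (continuousOn_const.prodMk (continuousOn_id.prodMk (hz.mono hsub)))
  have hdiff : volterraK α ψ a g z₁ t - volterraK α ψ a g z₂ t = (Real.Gamma α)⁻¹ •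
      ∫ σ in a..t, fracKernel α ψ t σ • (g t σ (z₁ σ) - g t σ (z₂ σ)) := by
    rw [volterraK_eq, volterraK_eq, ← smul_sub, ← integral_sub
      (hker.smul_continuousOn (hgz z₁ hz₁)) (hker.smul_continuousOn (hgz z₂ hz₂))]
    simp only [smul_sub]
  have hΓ : 0 ≤ (Real.Gamma α)⁻¹ := inv_nonneg.2 (Real.Gamma_pos_of_pos hα).le
  rw [hdiff, norm_smul, Real.norm_of_nonneg hΓ, fracIntegral, mul_left_comm,
    ← intervalIntegral.integral_const_mul]
  refine mul_le_mul_of_nonneg_left ((intervalIntegral.norm_integral_le_integral_norm ht.1).trans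
    (integral_mono_on_of_le_Ioo ht.1 ?_ ?_ fun σ hσ => ?_)) hΓ
  · exact (hker.smul_continuousOn ((hgz z₁ hz₁).sub (hgz z₂ hz₂))).norm
  · exact (intervalIntegrable_fracKernel_mul hα hψ hψ' ht
      ((hz₁.sub hz₂).norm.mono hsub)).const_mul R
  · have hk := fracKernel_nonneg (α := α) hψ ht hσ
    rw [norm_smul, Real.norm_of_nonneg hk, mul_left_comm]
    exact mul_le_mul_of_nonneg_left (hgLip σ hσ _ _) hk

theorem volterra_parameter_dependence_general
    (n : ℕ) (a b α Nbar Q μ μ₀ : ℝ) (ψ : ℝ → ℝ)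
    (h : ℝ → EuclideanSpace ℝ (Fin n) → EuclideanSpace ℝ (Fin n) → ℝ → EuclideanSpace ℝ (Fin n))
    (g : ℝ → ℝ → EuclideanSpace ℝ (Fin n) → EuclideanSpace ℝ (Fin n))
    (q : ℝ → ℝ) (rbar : ℝ → ℝ → ℝ)
    (z₁ z₂ : ℝ → EuclideanSpace ℝ (Fin n))
    (hα0 : 0 < α) (hα1 : α ≤ 1)
    (hmono : StrictMonoOn ψ (Icc a b)) (hC1ψ : ContDiffOn ℝ 1 ψ (Icc a b))
    (hN0 : 0 ≤ Nbar) (hN1 : Nbar < 1) (hQ : 0 ≤ Q)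
    (hg : Continuous fun p : ℝ × ℝ × EuclideanSpace ℝ (Fin n) => g p.1 p.2.1 p.2.2)
    (hqQ : ∀ t ∈ Icc a b, q t ≤ Q)
    (hrbar0 : ∀ t σ, a ≤ σ → σ ≤ t → t ≤ b → 0 ≤ rbar t σ)
    (hrdiagmono : MonotoneOn (fun t => rbar t t) (Icc a b))
    (hrdiag : ∀ t σ, a ≤ σ → σ ≤ t → t ≤ b → rbar t σ ≤ rbar t t)
    (hhLip : ∀ t u v u' v' (μ' : ℝ),
      ‖h t u v μ' - h t u' v' μ'‖ ≤ Nbar * (‖u - u'‖ + ‖v - v'‖))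
    (hhμ : ∀ t u v, ‖h t u v μ - h t u v μ₀‖ ≤ q t * |μ - μ₀|)
    (hgLip : ∀ t σ u v, ‖g t σ u - g t σ v‖ ≤ rbar t σ * ‖u - v‖)
    (hz₁ : ContinuousOn z₁ (Icc a b)) (hz₂ : ContinuousOn z₂ (Icc a b))
    (hz₁sol : ∀ t ∈ Icc a b, z₁ t = h t (z₁ t) (volterraK α ψ a g z₁ t) μ)
    (hz₂sol : ∀ t ∈ Icc a b, z₂ t = h t (z₂ t) (volterraK α ψ a g z₂ t) μ₀) :
    ∀ t ∈ Icc a b,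
      ‖z₁ t - z₂ t‖ ≤ Q * |μ - μ₀| / (1 - Nbar) *
        ML α (Nbar / (1 - Nbar) * rbar t t * (ψ t - ψ a) ^ α) := by
  intro t ht
  have hψ := hmono.monotoneOn
  have hratio : 0 ≤ Nbar / (1 - Nbar) := div_nonneg hN0 (sub_pos.2 hN1).le
  refine le_mul_ML_of_le_add_mul_fracIntegral (G := fun s => Nbar / (1 - Nbar) * rbar s s)
    (w := fun s => ‖z₁ s - z₂ s‖) hα0 hα1 hψ hC1ψ
    (div_nonneg (mul_nonneg hQ (abs_nonneg _)) (sub_pos.2 hN1).le)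
    (fun s hs => mul_nonneg hratio (hrbar0 s s hs.1 le_rfl hs.2))
    (fun s hs s' hs' hss' => mul_le_mul_of_nonneg_left (hrdiagmono hs hs' hss') hratio)
    (hz₁.sub hz₂).norm (fun s hs => ?_) ht
  have hK := norm_volterraK_sub_le hα0 hψ hC1ψ hg hz₁ hz₂ hs fun σ hσ u v =>
    (hgLip s σ u v).trans <|
      mul_le_mul_of_nonneg_right (hrdiag s σ hσ.1.le hσ.2.le hs.2) (norm_nonneg _)
  have hfix := norm_sub_le_of_eq_of_lipschitz (F₁ := fun u v => h s u v μ)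
    (F₂ := fun u v => h s u v μ₀) hN1 (hz₁sol s hs) (hz₂sol s hs) (hhLip s _ _ _ _ μ)
    ((hhμ s _ _).trans (mul_le_mul_of_nonneg_right (hqQ s hs) (abs_nonneg _)))
  calc ‖z₁ s - z₂ s‖
      ≤ Q * |μ - μ₀| / (1 - Nbar) +
          Nbar / (1 - Nbar) * ‖volterraK α ψ a g z₁ s - volterraK α ψ a g z₂ s‖ := hfix
    _ ≤ _ := by rw [mul_assoc]; gcongr

theorem volterra_parameter_dependence
    (n : ℕ) (a b α Nbar Q μ μ₀ : ℝ) (ψ : ℝ → ℝ)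
    (h : ℝ → EuclideanSpace ℝ (Fin n) → EuclideanSpace ℝ (Fin n) → ℝ → EuclideanSpace ℝ (Fin n))
    (g : ℝ → ℝ → EuclideanSpace ℝ (Fin n) → EuclideanSpace ℝ (Fin n))
    (q : ℝ → ℝ) (rbar : ℝ → ℝ → ℝ)
    (z₁ z₂ : ℝ → EuclideanSpace ℝ (Fin n))
    (hα0 : 0 < α) (hα1 : α ≤ 1) (hab : a ≤ b)
    (hmono : StrictMonoOn ψ (Icc a b)) (hC1ψ : ContDiffOn ℝ 1 ψ (Icc a b))
    (hN0 : 0 ≤ Nbar) (hN1 : Nbar < 1) (hQ : 0 ≤ Q)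
    (hh : Continuous fun p : ℝ × EuclideanSpace ℝ (Fin n) × EuclideanSpace ℝ (Fin n) × ℝ =>
      h p.1 p.2.1 p.2.2.1 p.2.2.2)
    (hg : Continuous fun p : ℝ × ℝ × EuclideanSpace ℝ (Fin n) => g p.1 p.2.1 p.2.2)
    (hq : ContinuousOn q (Icc a b)) (hq0 : ∀ t ∈ Icc a b, 0 ≤ q t)
    (hqQ : ∀ t ∈ Icc a b, q t ≤ Q)
    (hrbar : ContinuousOn (fun p : ℝ × ℝ => rbar p.1 p.2)
      {p : ℝ × ℝ | a ≤ p.2 ∧ p.2 ≤ p.1 ∧ p.1 ≤ b})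
    (hrbar0 : ∀ t σ, a ≤ σ → σ ≤ t → t ≤ b → 0 ≤ rbar t σ)
    (hrdiagmono : MonotoneOn (fun t => rbar t t) (Icc a b))
    (hrdiag : ∀ t σ, a ≤ σ → σ ≤ t → t ≤ b → rbar t σ ≤ rbar t t)
    (hhLip : ∀ t u v u' v' (μ' : ℝ),
      ‖h t u v μ' - h t u' v' μ'‖ ≤ Nbar * (‖u - u'‖ + ‖v - v'‖))
    (hhμ : ∀ t u v, ‖h t u v μ - h t u v μ₀‖ ≤ q t * |μ - μ₀|)
    (hgLip : ∀ t σ u v, ‖g t σ u - g t σ v‖ ≤ rbar t σ * ‖u - v‖)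
    (hz₁ : ContinuousOn z₁ (Icc a b)) (hz₂ : ContinuousOn z₂ (Icc a b))
    (hz₁sol : ∀ t ∈ Icc a b, z₁ t = h t (z₁ t) (volterraK α ψ a g z₁ t) μ)
    (hz₂sol : ∀ t ∈ Icc a b, z₂ t = h t (z₂ t) (volterraK α ψ a g z₂ t) μ₀) :
    ∀ t ∈ Icc a b,
      ‖z₁ t - z₂ t‖ ≤ Q * |μ - μ₀| / (1 - Nbar) *
        ML α (Nbar / (1 - Nbar) * rbar t t * (ψ t - ψ a) ^ α) :=
  volterra_parameter_dependence_general n a b α Nbar Q μ μ₀ ψ h g q rbar z₁ z₂ hα0 hα1 hmono hC1ψ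
    hN0 hN1 hQ hg hqQ hrbar0 hrdiagmono hrdiag hhLip hhμ hgLip hz₁ hz₂ hz₁sol hz₂sol
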